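/- Let x : ℝ² → ℝ³ be a twice differentiable map, let A be a real orthogonal 3×3 matrix and b ∈ ℝ³, and let ψ = (ψ₁,ψ₂) : ℝ² → ℝ² be a twice differentiable map such that A·x(t,s) + b = x(ψ(t,s)) for all (t,s) ∈ ℝ². Then at every point (t,s) where det J(t,s) > 0, x_t × x_s ≠ 0 at (t,s), and x_t × x_s ≠ 0 at ψ(t,s), one has K_x(t,s) = K_x(ψ(t,s)) and H_x(t,s) = det(A)·H_x(ψ(t,s)), where J(t,s) is the Jacobian matrix of ψ at (t,s). -/

import Mathlib

open Matrix

noncomputable section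

/-- ℝ³ with the standard (Euclidean) inner product. -/
abbrev E3 := EuclideanSpace ℝ (Fin 3)

/-- Cross product in ℝ³. -/
def cross (u v : E3) : E3 := WithLp.toLp 2 (crossProduct u v)

/-- Matrix–vector product `A·u`. -/
def mvec (A : Matrix (Fin 3) (Fin 3) ℝ) (u : E3) : E3 := WithLp.toLp 2 (A.mulVec u)

/-- First partial derivative `x_t` at `p`. -/
def pt (x : ℝ × ℝ → E3) (p : ℝ × ℝ) : E3 := fderiv ℝ x p (1, 0)

/-- First partial derivative `x_s` at `p`. -/
def ps (x : ℝ × ℝ → E3) (p : ℝ × ℝ) : E3 := fderiv ℝ x p (0, 1)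

/-- Coefficient `E = x_t · x_t` of the first fundamental form. -/
def coeffE (x : ℝ × ℝ → E3) (p : ℝ × ℝ) : ℝ := inner ℝ (pt x p) (pt x p)

/-- Coefficient `F = x_t · x_s` of the first fundamental form. -/
def coeffF (x : ℝ × ℝ → E3) (p : ℝ × ℝ) : ℝ := inner ℝ (pt x p) (ps x p)

/-- Coefficient `G = x_s · x_s` of the first fundamental form. -/
def coeffG (x : ℝ × ℝ → E3) (p : ℝ × ℝ) : ℝ := inner ℝ (ps x p) (ps x p)

/-- The first fundamental form `I_x = [[E,F],[F,G]]` at `p`. -/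
def firstFF (x : ℝ × ℝ → E3) (p : ℝ × ℝ) : Matrix (Fin 2) (Fin 2) ℝ :=
  !![coeffE x p, coeffF x p; coeffF x p, coeffG x p]

/-- The unit normal `n_x = (x_t × x_s)/‖x_t × x_s‖` at `p`. -/
def nrm (x : ℝ × ℝ → E3) (p : ℝ × ℝ) : E3 :=
  ‖cross (pt x p) (ps x p)‖⁻¹ • cross (pt x p) (ps x p)

/-- Coefficient `L = x_tt · n_x` of the second fundamental form. -/
def coeffL (x : ℝ × ℝ → E3) (p : ℝ × ℝ) : ℝ := inner ℝ (pt (pt x) p) (nrm x p)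

/-- Coefficient `M = x_ts · n_x` of the second fundamental form. -/
def coeffM (x : ℝ × ℝ → E3) (p : ℝ × ℝ) : ℝ := inner ℝ (ps (pt x) p) (nrm x p)

/-- Coefficient `N = x_ss · n_x` of the second fundamental form. -/
def coeffN (x : ℝ × ℝ → E3) (p : ℝ × ℝ) : ℝ := inner ℝ (ps (ps x) p) (nrm x p)

/-- The second fundamental form `II_x = [[L,M],[M,N]]` at `p`. -/
def secondFF (x : ℝ × ℝ → E3) (p : ℝ × ℝ) : Matrix (Fin 2) (Fin 2) ℝ :=
  !![coeffL x p, coeffM x p; coeffM x p, coeffN x p]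

/-- The Weingarten matrix `W_x = I_x⁻¹ · II_x` at `p`. -/
def wein (x : ℝ × ℝ → E3) (p : ℝ × ℝ) : Matrix (Fin 2) (Fin 2) ℝ :=
  (firstFF x p)⁻¹ * secondFF x p

/-- The Gauss curvature `K_x = (LN − M²)/(EG − F²)` at `p`. -/
def gauss (x : ℝ × ℝ → E3) (p : ℝ × ℝ) : ℝ :=
  (coeffL x p * coeffN x p - coeffM x p ^ 2) / (coeffE x p * coeffG x p - coeffF x p ^ 2)

/-- The mean curvature `H_x = (EN + GL − 2FM)/(2(EG − F²))` at `p`. -/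
def mean (x : ℝ × ℝ → E3) (p : ℝ × ℝ) : ℝ :=
  (coeffE x p * coeffN x p + coeffG x p * coeffL x p - 2 * coeffF x p * coeffM x p) /
    (2 * (coeffE x p * coeffG x p - coeffF x p ^ 2))

/-- The Jacobian matrix of `ψ : ℝ² → ℝ²` at `p`. -/
def jac (ψ : ℝ × ℝ → ℝ × ℝ) (p : ℝ × ℝ) : Matrix (Fin 2) (Fin 2) ℝ :=
  !![(fderiv ℝ ψ p (1, 0)).1, (fderiv ℝ ψ p (0, 1)).1;
     (fderiv ℝ ψ p (1, 0)).2, (fderiv ℝ ψ p (0, 1)).2]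

/-!
Differentiating `A·x + b = x ∘ ψ` shows that `A` carries the tangent vectors `x_t, x_s` at `p`
to the images under `J = Dψ(p)` of those at `ψ p`, so orthogonality of `A` gives
`I(p) = Jᵀ I(ψ p) J`. As `A` maps `u × v` to `det A · (Au × Av)` and `det J > 0`, the unit normals
satisfy `A n(p) = det A · n(ψ p)`; differentiating once more, the extra term `Dx(ψ p) (D²ψ(p) v w)`
is tangent, hence orthogonal to the normal, and `II(p) = det A · Jᵀ II(ψ p) J`. Writing
`K = det II / det I` and `H = tr (adj I · II) / (2 det I)`, the factors `det J ^ 2` cancel and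
`(det A) ^ 2 = 1`.
-/

lemma det_sq_eq_one_of_transpose_mul_self {n R : Type*} [Fintype n] [DecidableEq n] [CommRing R]
    {A : Matrix n n R} (hA : Aᵀ * A = 1) : A.det ^ 2 = 1 := by
  simpa [det_mul, det_transpose, sq] using congrArg det hA

lemma inner_mvec {A : Matrix (Fin 3) (Fin 3) ℝ} (hA : Aᵀ * A = 1) (u v : E3) :
    inner ℝ (mvec A u) (mvec A v) = inner ℝ u v := by
  simp only [mvec, EuclideanSpace.inner_eq_star_dotProduct]
  simp [dotProduct_mulVec, vecMul_mulVec, hA]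

lemma norm_mvec {A : Matrix (Fin 3) (Fin 3) ℝ} (hA : Aᵀ * A = 1) (u : E3) :
    ‖mvec A u‖ = ‖u‖ := by
  simp only [norm_eq_sqrt_real_inner, inner_mvec hA]

lemma mvec_smul (A : Matrix (Fin 3) (Fin 3) ℝ) (r : ℝ) (u : E3) :
    mvec A (r • u) = r • mvec A u :=
  congrArg (WithLp.toLp 2) (mulVec_smul A r u)

lemma transpose_mulVec_cross_mulVec (A : Matrix (Fin 3) (Fin 3) ℝ) (u v : Fin 3 → ℝ) :
    Aᵀ *ᵥ (A *ᵥ u) ⨯₃ (A *ᵥ v) = A.det • u ⨯₃ v := by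
  ext i
  fin_cases i <;>
    simp [crossProduct, mulVec, dotProduct, det_fin_three, Fin.sum_univ_three] <;> ring

lemma cross_mvec {A : Matrix (Fin 3) (Fin 3) ℝ} (hA : Aᵀ * A = 1) (u v : E3) :
    cross (mvec A u) (mvec A v) = A.det • mvec A (cross u v) := by
  have h := congrArg (A *ᵥ ·) (transpose_mulVec_cross_mulVec A u v)
  simp only [mulVec_mulVec, mul_eq_one_comm.mp hA, one_mulVec, mulVec_smul] at h
  exact congrArg (WithLp.toLp 2) h

lemma cross_smul_add_smul (u v : E3) (α β γ δ : ℝ) :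
    cross (α • u + β • v) (γ • u + δ • v) = (α * δ - β * γ) • cross u v := by
  ext i
  fin_cases i <;> simp [crossProduct, cross] <;> ring

/-- Equal to `0` when `u` and `v` are parallel, since `‖0‖⁻¹ = 0`. -/
def unitCross (u v : E3) : E3 := ‖cross u v‖⁻¹ • cross u v

lemma inner_left_unitCross (u v : E3) : inner ℝ u (unitCross u v) = 0 := by
  simp [unitCross, cross, EuclideanSpace.inner_eq_star_dotProduct,
    dotProduct_comm _ u.ofLp, dot_self_cross]

lemma inner_right_unitCross (u v : E3) : inner ℝ v (unitCross u v) = 0 := by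
  simp [unitCross, cross, EuclideanSpace.inner_eq_star_dotProduct,
    dotProduct_comm _ v.ofLp, dot_cross_self]

lemma unitCross_mvec {A : Matrix (Fin 3) (Fin 3) ℝ} (hA : Aᵀ * A = 1) (u v : E3) :
    unitCross (mvec A u) (mvec A v) = A.det • mvec A (unitCross u v) := by
  have habs : |A.det| = 1 := by
    rw [← pow_eq_one_iff_of_nonneg (abs_nonneg _) two_ne_zero, sq_abs]
    exact det_sq_eq_one_of_transpose_mul_self hA
  rw [unitCross, unitCross, cross_mvec hA, norm_smul, norm_mvec hA, Real.norm_eq_abs, habs,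
    one_mul, mvec_smul, smul_comm]

lemma unitCross_smul_add_smul {α β γ δ : ℝ} (h : 0 < α * δ - β * γ) (u v : E3) :
    unitCross (α • u + β • v) (γ • u + δ • v) = unitCross u v := by
  rw [unitCross, unitCross, cross_smul_add_smul, norm_smul, Real.norm_of_nonneg h.le, mul_inv,
    smul_smul, mul_comm _ ‖_‖⁻¹, inv_mul_cancel_right₀ h.ne']

lemma det_transpose_mul_mul {n R : Type*} [Fintype n] [DecidableEq n] [CommRing R]
    (J S : Matrix n n R) : (Jᵀ * S * J).det = J.det ^ 2 * S.det := by
  rw [det_mul, det_mul, det_transpose]; ring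

lemma trace_adjugate_mul_transpose_mul_mul {n R : Type*} [Fintype n] [DecidableEq n] [CommRing R]
    (J S T : Matrix n n R) :
    trace (adjugate (Jᵀ * S * J) * (Jᵀ * T * J)) = J.det ^ 2 * trace (adjugate S * T) := by
  calc trace (adjugate (Jᵀ * S * J) * (Jᵀ * T * J))
      = trace (adjugate J * adjugate S * (adjugate Jᵀ * Jᵀ) * T * J) := by
        simp only [adjugate_mul_distrib, Matrix.mul_assoc]
    _ = trace (J.det • (J * adjugate J * (adjugate S * T))) := by
        rw [adjugate_mul, det_transpose, trace_mul_comm]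
        simp only [Matrix.mul_smul, Matrix.smul_mul, Matrix.mul_one, Matrix.mul_assoc]
    _ = J.det ^ 2 * trace (adjugate S * T) := by
        rw [mul_adjugate, Matrix.smul_mul, Matrix.one_mul, smul_smul, trace_smul, smul_eq_mul,
          sq]

lemma fderiv_fderiv_apply {E F : Type*} [NormedAddCommGroup E] [NormedSpace ℝ E]
    [NormedAddCommGroup F] [NormedSpace ℝ F] {f : E → F} {q : E}
    (h : DifferentiableAt ℝ (fderiv ℝ f) q) (v w : E) :
    fderiv ℝ (fun q => fderiv ℝ f q w) q v = fderiv ℝ (fderiv ℝ f) q v w := by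
  rw [fderiv_clm_apply h (differentiableAt_const w)]
  simp

section AffineConjugacy

variable {E F : Type*} [NormedAddCommGroup E] [NormedSpace ℝ E] [NormedAddCommGroup F]
  [NormedSpace ℝ F] {x : E → F} {ψ : E → E} {L : F →L[ℝ] F} {b : F}

lemma comp_fderiv_of_forall_add_eq (hcomm : ∀ q, L (x q) + b = x (ψ q)) {q : E}
    (hxq : DifferentiableAt ℝ x q) (hxψ : DifferentiableAt ℝ x (ψ q))
    (hψ : DifferentiableAt ℝ ψ q) :
    L.comp (fderiv ℝ x q) = (fderiv ℝ x (ψ q)).comp (fderiv ℝ ψ q) := by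
  have hfun : (fun q => L (x q) + b) = x ∘ ψ := funext hcomm
  calc L.comp (fderiv ℝ x q) = fderiv ℝ (fun q => L (x q) + b) q :=
        ((L.hasFDerivAt.comp q hxq.hasFDerivAt).add_const b).fderiv.symm
    _ = (fderiv ℝ x (ψ q)).comp (fderiv ℝ ψ q) := by rw [hfun, fderiv_comp q hxψ hψ]

lemma map_fderiv_fderiv_of_forall_add_eq (hcomm : ∀ q, L (x q) + b = x (ψ q))
    (hx : ContDiff ℝ 2 x) (hψ : ContDiff ℝ 2 ψ) (q v w : E) :
    L (fderiv ℝ (fderiv ℝ x) q v w) =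
      fderiv ℝ (fderiv ℝ x) (ψ q) (fderiv ℝ ψ q v) (fderiv ℝ ψ q w) +
        fderiv ℝ x (ψ q) (fderiv ℝ (fderiv ℝ ψ) q v w) := by
  have hx1 : Differentiable ℝ x := hx.differentiable two_ne_zero
  have hψ1 : Differentiable ℝ ψ := hψ.differentiable two_ne_zero
  have hx2 : Differentiable ℝ (fderiv ℝ x) :=
    (hx.fderiv_right (m := 1) le_rfl).differentiable one_ne_zero
  have hψ2 : Differentiable ℝ (fderiv ℝ ψ) :=
    (hψ.fderiv_right (m := 1) le_rfl).differentiable one_ne_zero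
  have hfun : (fun q => L.comp (fderiv ℝ x q)) =
      fun q => (fderiv ℝ x (ψ q)).comp (fderiv ℝ ψ q) :=
    funext fun q => comp_fderiv_of_forall_add_eq hcomm (hx1 q) (hx1 (ψ q)) (hψ1 q)
  have hL := (hasFDerivAt_const L q).clm_comp (hx2 q).hasFDerivAt
  have hR :=
    ((hx2 (ψ q)).hasFDerivAt.comp q (hψ1 q).hasFDerivAt).clm_comp (hψ2 q).hasFDerivAt
  rw [hfun] at hL
  have h := congrArg (fun T => T v w) (hL.unique hR)
  simpa [add_comm] using h

end AffineConjugacy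

def firstForm (x : ℝ × ℝ → E3) (q : ℝ × ℝ) : (ℝ × ℝ) →ₗ[ℝ] (ℝ × ℝ) →ₗ[ℝ] ℝ :=
  (innerₗ E3).compl₁₂ (fderiv ℝ x q : (ℝ × ℝ) →ₗ[ℝ] E3) (fderiv ℝ x q)

def secondForm (x : ℝ × ℝ → E3) (q : ℝ × ℝ) : (ℝ × ℝ) →ₗ[ℝ] (ℝ × ℝ) →ₗ[ℝ] ℝ :=
  (fderiv ℝ (fderiv ℝ x) q).toLinearMap₁₂.compr₂ ((innerₗ E3).flip (nrm x q))

@[simp] lemma firstForm_apply (x : ℝ × ℝ → E3) (q v w : ℝ × ℝ) :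
    firstForm x q v w = inner ℝ (fderiv ℝ x q v) (fderiv ℝ x q w) := rfl

@[simp] lemma secondForm_apply (x : ℝ × ℝ → E3) (q v w : ℝ × ℝ) :
    secondForm x q v w = inner ℝ (fderiv ℝ (fderiv ℝ x) q v w) (nrm x q) := rfl

lemma firstFF_eq_toMatrix₂ (x : ℝ × ℝ → E3) (q : ℝ × ℝ) :
    firstFF x q = LinearMap.toMatrix₂ (.finTwoProd ℝ) (.finTwoProd ℝ) (firstForm x q) := by
  ext i j
  fin_cases i <;> fin_cases j <;>
    simp [firstFF, coeffE, coeffF, coeffG, pt, ps, LinearMap.toMatrix₂_apply, real_inner_comm]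

lemma secondFF_eq_toMatrix₂ {x : ℝ × ℝ → E3} {q : ℝ × ℝ} (hsymm : IsSymmSndFDerivAt ℝ x q)
    (hx : DifferentiableAt ℝ (fderiv ℝ x) q) :
    secondFF x q = LinearMap.toMatrix₂ (.finTwoProd ℝ) (.finTwoProd ℝ) (secondForm x q) := by
  have htt : pt (pt x) q = fderiv ℝ (fderiv ℝ x) q (1, 0) (1, 0) :=
    fderiv_fderiv_apply hx _ _
  have hts : ps (pt x) q = fderiv ℝ (fderiv ℝ x) q (0, 1) (1, 0) :=
    fderiv_fderiv_apply hx _ _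
  have hss : ps (ps x) q = fderiv ℝ (fderiv ℝ x) q (0, 1) (0, 1) :=
    fderiv_fderiv_apply hx _ _
  ext i j
  fin_cases i <;> fin_cases j <;>
    simp [secondFF, coeffL, coeffM, coeffN, htt, hts, hss, LinearMap.toMatrix₂_apply,
      hsymm (1, 0) (0, 1)]

lemma jac_eq_toMatrix (ψ : ℝ × ℝ → ℝ × ℝ) (p : ℝ × ℝ) :
    jac ψ p = LinearMap.toMatrix (.finTwoProd ℝ) (.finTwoProd ℝ) (fderiv ℝ ψ p) := by
  ext i j
  fin_cases i <;> fin_cases j <;> simp [jac, LinearMap.toMatrix_apply]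

lemma fderiv_apply_eq_add (x : ℝ × ℝ → E3) (q z : ℝ × ℝ) :
    fderiv ℝ x q z = z.1 • pt x q + z.2 • ps x q := by
  have hz : z = z.1 • ((1 : ℝ), (0 : ℝ)) + z.2 • ((0 : ℝ), (1 : ℝ)) := by ext <;> simp
  conv_lhs => rw [hz]
  rw [map_add, map_smul, map_smul, pt, ps]

lemma nrm_eq_unitCross (x : ℝ × ℝ → E3) (q : ℝ × ℝ) :
    nrm x q = unitCross (pt x q) (ps x q) := rfl

lemma inner_fderiv_nrm (x : ℝ × ℝ → E3) (q z : ℝ × ℝ) :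
    inner ℝ (fderiv ℝ x q z) (nrm x q) = 0 := by
  rw [fderiv_apply_eq_add, inner_add_left, real_inner_smul_left, real_inner_smul_left,
    nrm_eq_unitCross, inner_left_unitCross, inner_right_unitCross, mul_zero, mul_zero, add_zero]

lemma gauss_eq_det_div_det (x : ℝ × ℝ → E3) (q : ℝ × ℝ) :
    gauss x q = (secondFF x q).det / (firstFF x q).det := by
  rw [gauss, secondFF, firstFF, det_fin_two_of, det_fin_two_of, sq, sq]

lemma mean_eq_trace_div_det (x : ℝ × ℝ → E3) (q : ℝ × ℝ) :
    mean x q = trace (adjugate (firstFF x q) * secondFF x q) / (2 * (firstFF x q).det) := by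
  rw [mean, secondFF, firstFF, adjugate_fin_two_of, mul_fin_two, trace_fin_two_of, det_fin_two_of]
  ring

section Symmetry

variable {x : ℝ × ℝ → E3} {A : Matrix (Fin 3) (Fin 3) ℝ} {b : E3} {ψ : ℝ × ℝ → ℝ × ℝ}

lemma mvec_fderiv_of_symmetry (hcomm : ∀ q, mvec A (x q) + b = x (ψ q))
    (hx : Differentiable ℝ x) (hψ : Differentiable ℝ ψ) (q w : ℝ × ℝ) :
    mvec A (fderiv ℝ x q w) = fderiv ℝ x (ψ q) (fderiv ℝ ψ q w) :=
  congrArg (· w) (comp_fderiv_of_forall_add_eq (L := toEuclideanCLM (𝕜 := ℝ) A) hcomm (hx q)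
    (hx (ψ q)) (hψ q))

lemma firstForm_of_symmetry (hA : Aᵀ * A = 1) (hcomm : ∀ q, mvec A (x q) + b = x (ψ q))
    (hx : Differentiable ℝ x) (hψ : Differentiable ℝ ψ) (p : ℝ × ℝ) :
    firstForm x p =
      (firstForm x (ψ p)).compl₁₂ (fderiv ℝ ψ p : (ℝ × ℝ) →ₗ[ℝ] ℝ × ℝ) (fderiv ℝ ψ p) := by
  refine LinearMap.ext₂ fun v w => ?_
  rw [LinearMap.compl₁₂_apply, firstForm_apply, firstForm_apply, ← inner_mvec hA,
    mvec_fderiv_of_symmetry hcomm hx hψ, mvec_fderiv_of_symmetry hcomm hx hψ]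
  rfl

lemma mvec_nrm_of_symmetry (hA : Aᵀ * A = 1) (hcomm : ∀ q, mvec A (x q) + b = x (ψ q))
    (hx : Differentiable ℝ x) (hψ : Differentiable ℝ ψ) {p : ℝ × ℝ} (hJ : 0 < (jac ψ p).det) :
    mvec A (nrm x p) = A.det • nrm x (ψ p) := by
  have hpt : mvec A (pt x p) = _ :=
    (mvec_fderiv_of_symmetry hcomm hx hψ p (1, 0)).trans (fderiv_apply_eq_add _ _ _)
  have hps : mvec A (ps x p) = _ :=
    (mvec_fderiv_of_symmetry hcomm hx hψ p (0, 1)).trans (fderiv_apply_eq_add _ _ _)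
  have hJ' : 0 < (fderiv ℝ ψ p (1, 0)).1 * (fderiv ℝ ψ p (0, 1)).2 -
      (fderiv ℝ ψ p (1, 0)).2 * (fderiv ℝ ψ p (0, 1)).1 := by
    simpa [jac, det_fin_two_of, mul_comm] using hJ
  have h := unitCross_mvec hA (pt x p) (ps x p)
  rw [hpt, hps, unitCross_smul_add_smul hJ'] at h
  rw [nrm_eq_unitCross, nrm_eq_unitCross, h, smul_smul, ← sq,
    det_sq_eq_one_of_transpose_mul_self hA, one_smul]

lemma secondForm_of_symmetry (hA : Aᵀ * A = 1) (hcomm : ∀ q, mvec A (x q) + b = x (ψ q))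
    (hx : ContDiff ℝ 2 x) (hψ : ContDiff ℝ 2 ψ) {p : ℝ × ℝ} (hJ : 0 < (jac ψ p).det) :
    secondForm x p =
      A.det •
        (secondForm x (ψ p)).compl₁₂ (fderiv ℝ ψ p : (ℝ × ℝ) →ₗ[ℝ] ℝ × ℝ) (fderiv ℝ ψ p) := by
  refine LinearMap.ext₂ fun v w => ?_
  have hsnd : mvec A (fderiv ℝ (fderiv ℝ x) p v w) = _ :=
    map_fderiv_fderiv_of_forall_add_eq (L := toEuclideanCLM (𝕜 := ℝ) A) hcomm hx hψ p v w
  have hn := mvec_nrm_of_symmetry hA hcomm (hx.differentiable two_ne_zero)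
    (hψ.differentiable two_ne_zero) hJ
  simp only [secondForm_apply, LinearMap.smul_apply, LinearMap.compl₁₂_apply,
    ContinuousLinearMap.coe_coe, smul_eq_mul]
  rw [← inner_mvec hA, hn, hsnd, inner_add_left, real_inner_smul_right,
    real_inner_smul_right, inner_fderiv_nrm, mul_zero, add_zero]

lemma firstFF_of_symmetry (hA : Aᵀ * A = 1) (hcomm : ∀ q, mvec A (x q) + b = x (ψ q))
    (hx : Differentiable ℝ x) (hψ : Differentiable ℝ ψ) (p : ℝ × ℝ) :
    firstFF x p = (jac ψ p)ᵀ * firstFF x (ψ p) * jac ψ p := by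
  rw [firstFF_eq_toMatrix₂, firstForm_of_symmetry hA hcomm hx hψ, LinearMap.toMatrix₂_compl₁₂
    (.finTwoProd ℝ) (.finTwoProd ℝ), ← firstFF_eq_toMatrix₂, jac_eq_toMatrix]

lemma secondFF_of_symmetry (hA : Aᵀ * A = 1) (hcomm : ∀ q, mvec A (x q) + b = x (ψ q))
    (hx : ContDiff ℝ 2 x) (hψ : ContDiff ℝ 2 ψ) {p : ℝ × ℝ} (hJ : 0 < (jac ψ p).det) :
    secondFF x p = A.det • ((jac ψ p)ᵀ * secondFF x (ψ p) * jac ψ p) := by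
  have hsymm (q : ℝ × ℝ) : IsSymmSndFDerivAt ℝ x q :=
    hx.contDiffAt.isSymmSndFDerivAt (by simp)
  have hx2 : Differentiable ℝ (fderiv ℝ x) :=
    (hx.fderiv_right (m := 1) le_rfl).differentiable one_ne_zero
  rw [secondFF_eq_toMatrix₂ (hsymm p) (hx2 p), secondForm_of_symmetry hA hcomm hx hψ hJ,
    LinearEquiv.map_smul, LinearMap.toMatrix₂_compl₁₂ (.finTwoProd ℝ) (.finTwoProd ℝ),
    ← secondFF_eq_toMatrix₂ (hsymm (ψ p)) (hx2 (ψ p)), jac_eq_toMatrix]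

end Symmetry

theorem curvature_relations_of_symmetry_general
    (x : ℝ × ℝ → E3) (hx : ContDiff ℝ 2 x)
    (A : Matrix (Fin 3) (Fin 3) ℝ) (hA : Aᵀ * A = 1) (b : E3)
    (ψ : ℝ × ℝ → ℝ × ℝ) (hψ : ContDiff ℝ 2 ψ)
    (hcomm : ∀ p : ℝ × ℝ, mvec A (x p) + b = x (ψ p)) (p : ℝ × ℝ)
    (hJ : 0 < (jac ψ p).det) :
    gauss x p = gauss x (ψ p) ∧ mean x p = A.det * mean x (ψ p) := by
  have hI := firstFF_of_symmetry hA hcomm (hx.differentiable two_ne_zero)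
    (hψ.differentiable two_ne_zero) p
  have hII := secondFF_of_symmetry hA hcomm hx hψ hJ
  have hJ2 : (jac ψ p).det ^ 2 ≠ 0 := by positivity
  constructor
  · rw [gauss_eq_det_div_det, gauss_eq_det_div_det, hI, hII, det_smul, det_transpose_mul_mul,
      det_transpose_mul_mul, Fintype.card_fin, det_sq_eq_one_of_transpose_mul_self hA, one_mul,
      mul_div_mul_left _ _ hJ2]
  · rw [mean_eq_trace_div_det, mean_eq_trace_div_det, hI, hII, Matrix.mul_smul, trace_smul,
      trace_adjugate_mul_transpose_mul_mul, det_transpose_mul_mul, smul_eq_mul, mul_left_comm 2,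
      mul_div_assoc, mul_div_mul_left _ _ hJ2]

/-- if `A·x + b = x ∘ ψ`, then `K_x = K_x(ψ)` and
`H_x = det(A)·H_x(ψ)`. -/
theorem curvature_relations_of_symmetry
    (x : ℝ × ℝ → E3) (hx : ContDiff ℝ 2 x)
    (A : Matrix (Fin 3) (Fin 3) ℝ) (hA : Aᵀ * A = 1) (b : E3)
    (ψ : ℝ × ℝ → ℝ × ℝ) (hψ : ContDiff ℝ 2 ψ)
    (hcomm : ∀ p : ℝ × ℝ, mvec A (x p) + b = x (ψ p)) (p : ℝ × ℝ)
    (hJ : 0 < (jac ψ p).det)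
    (hreg : cross (pt x p) (ps x p) ≠ 0)
    (hreg' : cross (pt x (ψ p)) (ps x (ψ p)) ≠ 0) :
    gauss x p = gauss x (ψ p) ∧ mean x p = A.det * mean x (ψ p) :=
  curvature_relations_of_symmetry_general x hx A hA b ψ hψ hcomm p hJ
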